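/- arXiv:2401.00382 — 2 statements merged into one kernel-verified Lean document; each statement's English description precedes it below -/
import Mathlib

section
/- Let X be a topological vector space over K (K = ℝ or ℂ), M a subset of X, and α an infinite cardinal with w(X) ≤ α. Then M is α-dense-lineable if, and only if, M is α-infinitely α-dense-lineable. -/
universe u

open Cardinal

/-- The weight of a topological space: the smallest cardinality of a basis for its topology. -/
noncomputable def tsWeight (X : Type u) [TopologicalSpace X] : Cardinal.{u} :=
  sInf { c : Cardinal.{u} | ∃ B : Set (Set X),
    TopologicalSpace.IsTopologicalBasis B ∧ #↥B = c }

variable (𝕜 : Type) [RCLike 𝕜] {X : Type u} [AddCommGroup X] [Module 𝕜 X] [TopologicalSpace X]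

/-- `M` is `α`-dense-lineable: there is a dense linear subspace `Y` of `X` with `dim Y = α`
and `Y ⊆ M ∪ {0}`. -/
def DenseLineable (M : Set X) (α : Cardinal.{u}) : Prop :=
  ∃ Y : Submodule 𝕜 X, Dense (Y : Set X) ∧ Module.rank 𝕜 Y = α ∧ (Y : Set X) ⊆ M ∪ {0}

/-- `M` is `α`-infinitely `β`-dense-lineable: there is a family `{Y_κ}_{κ<α}` of `β`-dimensional
dense linear subspaces of `X` contained in `M ∪ {0}` with pairwise trivial intersections. -/
def InfDenseLineable (M : Set X) (α β : Cardinal.{u}) : Prop :=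
  ∃ (ι : Type u) (Y : ι → Submodule 𝕜 X), #ι = α ∧
    (∀ i, Dense (Y i : Set X) ∧ Module.rank 𝕜 (Y i) = β ∧ (Y i : Set X) ⊆ M ∪ {0}) ∧
    ∀ i j, i ≠ j → Y i ⊓ Y j = ⊥

/-!
Let `Y` be a dense subspace of dimension `α`, and let `T` carry a well-order of type `α` and a
bijection `T ≃ T × T`. Since `w(X) ≤ α`, the nonempty basic open sets can be listed as `U j`,
`j ∈ T`. By transfinite recursion choose, at the index of `(κ, j)`, a vector of `Y ∩ U j` outside
the span of the fewer than `α` vectors chosen before: a dense subspace of dimension `α` meets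
every nonempty open set outside any subspace of smaller dimension. The chosen vectors are
linearly independent, so the spans of the rows `κ` are `α`-dimensional with pairwise trivial
intersections, and each is dense because it meets every `U j`.
-/

open Set Submodule Filter Topology Function

section LinearAlgebra

variable {K : Type*} [DivisionRing K]

theorem linearIndependent_of_notMem_span_image_Iio {V ι : Type*} [AddCommGroup V] [Module K V]
    [LinearOrder ι] {f : ι → V} (h : ∀ i, f i ∉ span K (f '' Iio i)) :
    LinearIndependent K f := by
  classical
  refine linearIndependent_iff_finset_linearIndependent.2 fun t => ?_
  change LinearIndepOn K f t
  induction t using Finset.induction_on_max with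
  | empty => simp
  | insert a s hlt ih =>
    rw [Finset.coe_insert]
    exact ih.insert fun ha => h a (span_mono (image_mono fun x hx => hlt x hx) ha)

theorem exists_linearIndependent_forall_mem {V T : Type u} [AddCommGroup V] [Module K V]
    [LinearOrder T] [WellFoundedLT T] (C : T → Set V)
    (h : ∀ i (P : Set V), #P ≤ #(Iio i) → ∃ y ∈ C i, y ∉ span K P) :
    ∃ f : T → V, LinearIndependent K f ∧ ∀ i, f i ∈ C i := by
  choose g hgC hgP using h
  let f : T → V := WellFoundedLT.fix fun i prev =>
    g i (range fun j : Iio i => prev j j.2) mk_range_le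
  have hf : ∀ i, f i = g i (f '' Iio i) ((image_eq_range f _).symm ▸ mk_range_le) := fun i => by
    simp only [f]
    rw [WellFoundedLT.fix_eq]
    congr 1
    exact (image_eq_range f _).symm
  refine ⟨f, linearIndependent_of_notMem_span_image_Iio fun i => ?_, fun i => ?_⟩
  · rw [hf]
    apply hgP
  · rw [hf]
    apply hgC

theorem LinearIndependent.pairwise_disjoint_span_range {V ι κ : Type*} [AddCommGroup V]
    [Module K V] {F : ι → κ → V} (hF : LinearIndependent K (uncurry F)) :
    Pairwise (Disjoint on fun i => span K (range (F i))) := by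
  intro i₁ i₂ hne
  have hdisj : Disjoint (range (Prod.mk i₁ : κ → ι × κ)) (range (Prod.mk i₂)) :=
    disjoint_left.2 fun _ ⟨_, h₁⟩ ⟨_, h₂⟩ => hne (congrArg Prod.fst (h₁.trans h₂.symm))
  have := hF.disjoint_span_image hdisj
  rwa [← range_comp, ← range_comp] at this

end LinearAlgebra

theorem exists_isTopologicalBasis_mk_eq_tsWeight (X : Type u) [TopologicalSpace X] :
    ∃ B : Set (Set X), TopologicalSpace.IsTopologicalBasis B ∧ #B = tsWeight X :=
  csInf_mem (s := {c | ∃ B : Set (Set X), TopologicalSpace.IsTopologicalBasis B ∧ #B = c})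
    ⟨_, _, TopologicalSpace.isTopologicalBasis_opens, rfl⟩

theorem exists_isOpen_nonempty_family_subset_of_tsWeight_le {Y T : Type u} [TopologicalSpace Y]
    [Nonempty Y] (h : tsWeight Y ≤ #T) :
    ∃ U : T → Set Y, (∀ j, IsOpen (U j) ∧ (U j).Nonempty) ∧
      ∀ O, IsOpen O → O.Nonempty → ∃ j, U j ⊆ O := by
  obtain ⟨B, hB, hBw⟩ := exists_isTopologicalBasis_mk_eq_tsWeight Y
  let B' := {V ∈ B | V.Nonempty}
  have hsub : ∀ (O : Set Y) x, IsOpen O → x ∈ O → ∃ V ∈ B', V ⊆ O := fun O x hO hx => by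
    obtain ⟨V, hVB, hxV, hVO⟩ := hB.exists_subset_of_mem_open hx hO
    exact ⟨V, ⟨hVB, x, hxV⟩, hVO⟩
  obtain ⟨V₀, hV₀⟩ := hsub _ _ isOpen_univ (mem_univ (Classical.arbitrary Y))
  have : Nonempty B' := ⟨⟨V₀, hV₀.1⟩⟩
  have hB' : #B' ≤ #T := (mk_le_mk_of_subset (sep_subset B _)).trans (hBw.trans_le h)
  obtain ⟨g⟩ : Nonempty (B' ↪ T) := le_def _ _ |>.1 hB'
  refine ⟨fun j => ((invFun (g : B' → T) j : B') : Set Y), fun j => ?_, fun O hO ⟨x, hx⟩ => ?_⟩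
  · have hj := (invFun (g : B' → T) j).2
    exact ⟨hB.isOpen hj.1, hj.2⟩
  · obtain ⟨V, hV, hVO⟩ := hsub O x hO hx
    obtain ⟨j, hj⟩ := invFun_surjective g.injective ⟨V, hV⟩
    exact ⟨j, by dsimp only; rwa [hj]⟩

section TopologicalVectorSpace

variable {K : Type*} [NontriviallyNormedField K] {E : Type u} [AddCommGroup E] [Module K E]
  [TopologicalSpace E] [ContinuousAdd E] [ContinuousSMul K E]

theorem Submodule.exists_add_smul_mem_notMem {W : Submodule K E} {U : Set E} (hU : IsOpen U)
    {d e : E} (hdU : d ∈ U) (hdW : d ∈ W) (heW : e ∉ W) :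
    ∃ t : K, d + t • e ∈ U ∧ d + t • e ∉ W := by
  have hcont : Continuous fun t : K => d + t • e :=
    continuous_const.add (continuous_id.smul continuous_const)
  have hU0 : ∀ᶠ t in 𝓝[≠] (0 : K), d + t • e ∈ U :=
    nhdsWithin_le_nhds (hcont.continuousAt.preimage_mem_nhds (hU.mem_nhds (by simpa using hdU)))
  obtain ⟨t, htU, ht0⟩ := (hU0.and self_mem_nhdsWithin).exists
  exact ⟨t, htU, by rwa [W.add_mem_iff_right hdW, W.smul_mem_iff ht0]⟩

theorem Dense.exists_mem_open_notMem_span {Y : Submodule K E} (hY : Dense (Y : Set E))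
    (hYr : ℵ₀ ≤ Module.rank K Y) {U : Set E} (hU : IsOpen U) (hUne : U.Nonempty) {P : Set E}
    (hP : #P < Module.rank K Y) : ∃ y ∈ Y, y ∈ U ∧ y ∉ span K P := by
  obtain ⟨d, hdU, hdY⟩ := hY.inter_open_nonempty U hU hUne
  have hrank : Module.rank K (span K (insert d P)) < Module.rank K Y :=
    calc Module.rank K (span K (insert d P))
      _ ≤ #(insert d P : Set E) := rank_span_le _
      _ ≤ #P + 1 := mk_insert_le
      _ < Module.rank K Y := add_lt_of_lt hYr hP (one_lt_aleph0.trans_le hYr)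
  obtain ⟨e, heY, heW⟩ := SetLike.not_le_iff_exists.1 fun hle => (rank_mono hle).not_gt hrank
  obtain ⟨t, htU, htW⟩ :=
    Submodule.exists_add_smul_mem_notMem hU hdU (subset_span (mem_insert d P)) heW
  exact ⟨d + t • e, Y.add_mem hdY (Y.smul_mem t heY), htU,
    fun h => htW (span_mono (subset_insert d P) h)⟩

theorem Dense.exists_pairwise_disjoint_dense_submodules {Y : Submodule K E}
    (hY : Dense (Y : Set E)) (hYr : ℵ₀ ≤ Module.rank K Y) (hw : tsWeight E ≤ Module.rank K Y) :
    ∃ (ι : Type u) (Z : ι → Submodule K E), #ι = Module.rank K Y ∧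
      (∀ i, Dense (Z i : Set E) ∧ Module.rank K (Z i) = Module.rank K Y ∧ Z i ≤ Y) ∧
      Pairwise (Disjoint on Z) := by
  let T := (Module.rank K Y).ord.ToType
  have hT : #T = Module.rank K Y := mk_ord_toType _
  obtain ⟨e⟩ : Nonempty (T ≃ T × T) :=
    Cardinal.eq.1 (by rw [mk_prod, lift_id, hT, mul_eq_self hYr])
  obtain ⟨U, hU, hUsub⟩ := exists_isOpen_nonempty_family_subset_of_tsWeight_le (hw.trans hT.ge)
  obtain ⟨f, hf, hfC⟩ := exists_linearIndependent_forall_mem (K := K)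
    (fun i => (Y : Set E) ∩ U (e i).2) fun i P hP =>
      have ⟨y, hyY, hyU, hyP⟩ := hY.exists_mem_open_notMem_span hYr (hU _).1 (hU _).2
        (hP.trans_lt ((mk_Iio_lt i (by simp [T])).trans_eq hT))
      ⟨y, ⟨hyY, hyU⟩, hyP⟩
  let F : T → T → E := fun κ j => f (e.symm (κ, j))
  have hF : LinearIndependent K (uncurry F) := hf.comp e.symm e.symm.injective
  have hFC : ∀ κ j, F κ j ∈ (Y : Set E) ∩ U j := fun κ j => by
    simpa [F] using hfC (e.symm (κ, j))
  refine ⟨T, fun κ => span K (range (F κ)), hT, fun κ => ⟨?_, ?_, ?_⟩,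
    hF.pairwise_disjoint_span_range⟩
  · refine dense_iff_inter_open.2 fun O hO hOne => ?_
    obtain ⟨j, hj⟩ := hUsub O hO hOne
    exact ⟨F κ j, hj (hFC κ j).2, subset_span ⟨j, rfl⟩⟩
  · have hFκ : LinearIndependent K (F κ) := hF.comp _ (Prod.mk_right_injective κ)
    rw [rank_span hFκ, mk_range_eq _ hFκ.injective, hT]
  · exact span_le.2 (range_subset_iff.2 fun j => (hFC κ j).1)

end TopologicalVectorSpace

/-- Let `X` be a topological vector space over `𝕜` (`𝕜 = ℝ` or `ℂ`), `M ⊆ X`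
and `α` an infinite cardinal with `w(X) ≤ α`.  Then `M` is `α`-dense-lineable iff `M` is
`α`-infinitely `α`-dense-lineable. -/
theorem stmt5 [IsTopologicalAddGroup X] [ContinuousSMul 𝕜 X] (M : Set X) (α : Cardinal.{u})
    (hα : Cardinal.aleph0 ≤ α) (hw : tsWeight X ≤ α) :
    DenseLineable 𝕜 M α ↔ InfDenseLineable 𝕜 M α α := by
  constructor
  · rintro ⟨Y, hYd, rfl, hYM⟩
    obtain ⟨ι, Z, hι, hZ, hdisj⟩ := Dense.exists_pairwise_disjoint_dense_submodules hYd hα hw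
    refine ⟨ι, Z, hι, fun i => ⟨(hZ i).1, (hZ i).2.1, ?_⟩,
      fun i j hij => disjoint_iff.1 (hdisj hij)⟩
    exact (SetLike.coe_subset_coe.2 (hZ i).2.2).trans hYM
  · rintro ⟨ι, Y, hι, hY, -⟩
    obtain ⟨i⟩ : Nonempty ι := mk_ne_zero_iff.1 (hι ▸ (aleph0_pos.trans_le hα).ne')
    exact ⟨Y i, hY i⟩
end

section
/- Let X be an infinite-dimensional first-countable topological vector space over K (K = ℝ or ℂ), M a subset of X, and α, γ cardinals with α ≥ ℵ₀ and α > γ. Then M is (γ,α)-dense-lineable if, and only if, M is α-infinitely (γ,α)-dense-lineable. -/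
universe u

open Cardinal
variable (𝕜 : Type) [RCLike 𝕜] {X : Type u} [AddCommGroup X] [Module 𝕜 X] [TopologicalSpace X]


/-- `M` is `(γ,β)`-dense-lineable: `M` is `γ`-lineable and every `γ`-dimensional linear subspace
`W ⊆ M ∪ {0}` is contained in a `β`-dimensional dense linear subspace `Y ⊆ M ∪ {0}`. -/
def GBDenseLineable (M : Set X) (γ β : Cardinal.{u}) : Prop :=
  (∃ W : Submodule 𝕜 X, Module.rank 𝕜 W = γ ∧ (W : Set X) ⊆ M ∪ {0}) ∧
  ∀ W : Submodule 𝕜 X, Module.rank 𝕜 W = γ → (W : Set X) ⊆ M ∪ {0} →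
    ∃ Y : Submodule 𝕜 X, W ≤ Y ∧ Dense (Y : Set X) ∧ Module.rank 𝕜 Y = β ∧
      (Y : Set X) ⊆ M ∪ {0}

/-- `M` is `α`-infinitely `(γ,β)`-dense-lineable: `M` is `γ`-lineable and, for every
`γ`-dimensional linear subspace `W ⊆ M ∪ {0}`, there is a family `{Y_κ}_{κ<α}` of
`β`-dimensional dense linear subspaces with `W ⊆ Y_κ ⊆ M ∪ {0}` and `Y_{κ₁} ∩ Y_{κ₂} = W`
whenever `κ₁ ≠ κ₂`. -/
def InfGBDenseLineable (M : Set X) (α γ β : Cardinal.{u}) : Prop :=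
  (∃ W : Submodule 𝕜 X, Module.rank 𝕜 W = γ ∧ (W : Set X) ⊆ M ∪ {0}) ∧
  ∀ W : Submodule 𝕜 X, Module.rank 𝕜 W = γ → (W : Set X) ⊆ M ∪ {0} →
    ∃ (ι : Type u) (Y : ι → Submodule 𝕜 X), #ι = α ∧
      (∀ i, W ≤ Y i ∧ Dense (Y i : Set X) ∧ Module.rank 𝕜 (Y i) = β ∧
        (Y i : Set X) ⊆ M ∪ {0}) ∧
      ∀ i j, i ≠ j → Y i ⊓ Y j = W

/-! Let `W ⊆ Y` with `Y` dense of dimension `α` and `dim W < α`. A complement `V` of `W` in `Y`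
still has dimension `α`, so it has a basis `(b t)` indexed by `A × ℕ` with `#A = α`. For each of
`α` labels `κ`, take the vectors `b t + c • b (h (κ, t, n))` with `c ≠ 0` so small that they tend
to `b t` as `n → ∞` (first countability); their span `S κ` has `V` in its closure, so `W ⊔ S κ`
is dense. An injection `h` that raises the `ℕ`-coordinate makes the whole family triangular with
respect to `b`, hence linearly independent, so the `S κ` are pairwise disjoint inside `V` and
`(W ⊔ S κ) ⊓ (W ⊔ S κ') = W` by modularity. -/

open Filter Function Set Topology

theorem sup_inf_sup_eq_of_disjoint {α : Type*} [Lattice α] [OrderBot α] [IsModularLattice α]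
    {a b c v : α} (hav : Disjoint a v) (hbv : b ≤ v) (hcv : c ≤ v) (hbc : Disjoint b c) :
    (a ⊔ b) ⊓ (a ⊔ c) = a := by
  have hc : (c ⊔ a) ⊓ v = c := by
    rw [sup_inf_assoc_of_le a hcv, hav.eq_bot, sup_bot_eq]
  have hb : b ⊓ (a ⊔ c) ≤ b ⊓ c := by
    refine le_inf inf_le_left ?_
    calc b ⊓ (a ⊔ c) ≤ (c ⊔ a) ⊓ v :=
          le_inf (sup_comm a c ▸ inf_le_right) (inf_le_left.trans hbv)
      _ = c := hc
  rw [sup_inf_assoc_of_le b le_sup_left, eq_bot_iff.2 (hb.trans hbc.le_bot), sup_bot_eq]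

theorem Module.Basis.linearIndependent_add_smul_of_level_lt {R M T I : Type*} [Ring R]
    [NoZeroDivisors R] [AddCommGroup M] [Module R M] (b : Module.Basis T R M) {s h : I → T}
    (hh : Function.Injective h) (level : T → ℕ) (hlevel : ∀ i, level (s i) < level (h i))
    {c : I → R} (hc : ∀ i, c i ≠ 0) :
    LinearIndependent R (fun i => b (s i) + c i • b (h i)) := by
  classical
  rw [linearIndependent_iff]
  intro l hl
  by_contra hne
  obtain ⟨i, hi, hmax⟩ := l.support.exists_max_image (level ∘ h)
    (Finsupp.support_nonempty_iff.mpr hne)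
  have hcoord : ∀ j ∈ l.support, b.repr (l j • (b (s j) + c j • b (h j))) (h i) =
      if j = i then l i * c i else 0 := by
    intro j hj
    have hs : s j ≠ h i := by
      intro hji
      have hlt := hlevel j
      rw [hji] at hlt
      exact (hmax j hj).not_gt hlt
    by_cases hji : j = i
    · subst hji; simp [hs]
    · simp [hs, hji, hh.ne hji]
  have h0 := congrArg (fun x => b.repr x (h i)) hl
  simp only [Finsupp.linearCombination_apply, Finsupp.sum, map_sum, Finsupp.finsetSum_apply,
    Finset.sum_congr rfl hcoord, Finset.sum_ite_eq', if_pos hi, map_zero,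
    Finsupp.zero_apply] at h0
  exact mul_ne_zero (Finsupp.mem_support_iff.mp hi) (hc i) h0

theorem exists_ne_zero_smul_tendsto_zero {K E : Type*} [NontriviallyNormedField K]
    [AddCommMonoid E] [Module K E] [TopologicalSpace E] [ContinuousSMul K E]
    [FirstCountableTopology E] (y : ℕ → E) :
    ∃ c : ℕ → K, (∀ n, c n ≠ 0) ∧ Tendsto (fun n => c n • y n) atTop (𝓝 0) := by
  obtain ⟨U, hU⟩ := (𝓝 (0 : E)).exists_antitone_basis
  have hsmall : ∀ n, ∃ μ : K, μ ≠ 0 ∧ μ • y n ∈ U n := by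
    intro n
    have hcont : Tendsto (fun μ : K => μ • y n) (𝓝 0) (𝓝 0) := by
      simpa using (tendsto_id (x := 𝓝 (0 : K))).smul_const (y n)
    have hev : ∀ᶠ μ in 𝓝[≠] (0 : K), μ • y n ∈ U n ∧ μ ≠ 0 :=
      (eventually_nhdsWithin_of_eventually_nhds (hcont (hU.mem n))).and self_mem_nhdsWithin
    obtain ⟨μ, hμU, hμ⟩ := hev.exists
    exact ⟨μ, hμ, hμU⟩
  choose c hc0 hcU using hsmall
  exact ⟨c, hc0, hU.tendsto hcU⟩

section Construction

variable {K : Type*} {E : Type u} [NontriviallyNormedField K] [AddCommGroup E] [Module K E]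
  [TopologicalSpace E] [IsTopologicalAddGroup E] [ContinuousSMul K E] [FirstCountableTopology E]

theorem Submodule.exists_pairwise_disjoint_le_topologicalClosure_of_basis {A : Type u}
    (V : Submodule K E) (b : Module.Basis (A × ℕ) K V) {ψ : A × (A × ℕ) × ℕ → A}
    (hψ : Function.Injective ψ) :
    ∃ S : A → Submodule K E, Pairwise (Disjoint on S) ∧
      ∀ κ, S κ ≤ V ∧ V ≤ (S κ).topologicalClosure ∧ Module.rank K (S κ) = #((A × ℕ) × ℕ) := by
  set h : A × (A × ℕ) × ℕ → A × ℕ := fun i => (ψ i, i.2.1.2 + 1)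
  have hh : Function.Injective h := fun i j hij => hψ (congrArg Prod.fst hij)
  choose c hc0 hc using fun p : A × (A × ℕ) =>
    exists_ne_zero_smul_tendsto_zero (K := K) fun n => (b (h (p.1, p.2, n)) : E)
  set v : A × (A × ℕ) × ℕ → V := fun i => b i.2.1 + c (i.1, i.2.1) i.2.2 • b (h i)
  set g : A × (A × ℕ) × ℕ → E := V.subtype ∘ v
  have hg : LinearIndependent K g :=
    (b.linearIndependent_add_smul_of_level_lt hh Prod.snd (fun _ => Nat.lt_succ_self _)
      (fun _ => hc0 _ _)).map' V.subtype V.ker_subtype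
  have hV : V = span K (range (V.subtype ∘ b)) := by
    rw [Set.range_comp, ← Submodule.map_span, b.span_eq, Submodule.map_top,
      Submodule.range_subtype]
  refine ⟨fun κ => span K (range (g ∘ Prod.mk κ)), ?_, fun κ => ⟨?_, ?_, ?_⟩⟩
  · intro i j hij
    simp only [Function.onFun, Set.range_comp]
    refine hg.disjoint_span_image (Set.disjoint_left.2 ?_)
    rintro _ ⟨p, rfl⟩ ⟨q, hq⟩
    exact hij (congrArg Prod.fst hq).symm
  · rw [span_le]
    rintro _ ⟨p, rfl⟩
    exact (v (κ, p)).2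
  · rw [hV, span_le]
    rintro _ ⟨t, rfl⟩
    have hlim : Tendsto (fun n => g (κ, t, n)) atTop (𝓝 (b t)) := by
      simpa [g, v] using (hc (κ, t)).const_add (b t : E)
    exact mem_closure_of_tendsto hlim (Eventually.of_forall fun n => subset_span ⟨(t, n), rfl⟩)
  · have hgκ := hg.comp _ (Prod.mk_right_injective κ)
    rw [rank_span hgκ, Cardinal.mk_range_eq _ hgκ.injective]

theorem Submodule.exists_pairwise_disjoint_le_topologicalClosure (V : Submodule K E)
    (hV : ℵ₀ ≤ Module.rank K V) :
    ∃ (ι : Type u) (S : ι → Submodule K E), #ι = Module.rank K V ∧ Pairwise (Disjoint on S) ∧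
      ∀ i, S i ≤ V ∧ V ≤ (S i).topologicalClosure ∧ Module.rank K (S i) = Module.rank K V := by
  set α := Module.rank K V
  have hA : #(α.out × ℕ) = α := by
    simp [Cardinal.mul_aleph0_eq hV]
  have hψ : #(α.out × (α.out × ℕ) × ℕ) = #α.out := by
    simp [Cardinal.mul_aleph0_eq hV, Cardinal.mul_eq_self hV]
  obtain ⟨e⟩ := Cardinal.eq.1 ((Module.Basis.ofVectorSpace K V).mk_eq_rank''.trans hA.symm)
  obtain ⟨ψ⟩ := Cardinal.eq.1 hψ
  obtain ⟨S, hS, hSV⟩ := V.exists_pairwise_disjoint_le_topologicalClosure_of_basis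
    ((Module.Basis.ofVectorSpace K V).reindex e) ψ.injective
  refine ⟨α.out, S, α.mk_out, hS, fun i => ⟨(hSV i).1, (hSV i).2.1, ?_⟩⟩
  rw [(hSV i).2.2, Cardinal.mk_prod, hA]
  simp [Cardinal.mul_aleph0_eq hV]

theorem Submodule.exists_dense_family_inf_eq (W Y : Submodule K E) (hWY : W ≤ Y)
    (hY : Dense (Y : Set E)) (hWr : Module.rank K W < Module.rank K Y)
    (hYr : ℵ₀ ≤ Module.rank K Y) :
    ∃ (ι : Type u) (Z : ι → Submodule K E), #ι = Module.rank K Y ∧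
      (∀ i, W ≤ Z i ∧ Z i ≤ Y ∧ Dense (Z i : Set E) ∧ Module.rank K (Z i) = Module.rank K Y) ∧
      ∀ i j, i ≠ j → Z i ⊓ Z j = W := by
  obtain ⟨V, hWV, hWVY⟩ := IsModularLattice.exists_disjoint_and_sup_eq hWY
  have hV : Module.rank K V = Module.rank K Y := by
    refine Cardinal.eq_of_add_eq_of_aleph0_le ?_ hWr hYr
    rw [← hWVY, ← Submodule.rank_sup_add_rank_inf_eq, hWV.eq_bot, rank_bot, add_zero]
  obtain ⟨ι, S, hι, hS, hSV⟩ := V.exists_pairwise_disjoint_le_topologicalClosure (hV ▸ hYr)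
  refine ⟨ι, fun i => W ⊔ S i, hι.trans hV, fun i => ?_,
    fun i j hij => sup_inf_sup_eq_of_disjoint hWV (hSV i).1 (hSV j).1 (hS hij)⟩
  obtain ⟨hSiV, hVSi, hSir⟩ := hSV i
  have hle : W ⊔ S i ≤ Y := hWVY ▸ sup_le_sup_left hSiV W
  have hclosure : Y ≤ (W ⊔ S i).topologicalClosure := hWVY ▸ sup_le
    (le_sup_left.trans (le_topologicalClosure _))
    (hVSi.trans (topologicalClosure_mono le_sup_right))
  refine ⟨le_sup_left, hle, dense_closure.mp (hY.mono hclosure), le_antisymm (rank_mono hle) ?_⟩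
  calc Module.rank K Y = Module.rank K (S i) := by rw [hSir, hV]
    _ ≤ Module.rank K (W ⊔ S i : Submodule K E) := rank_mono le_sup_right

end Construction

theorem stmt12 [IsTopologicalAddGroup X] [ContinuousSMul 𝕜 X] [FirstCountableTopology X]
    (M : Set X) (α γ : Cardinal.{u})
    (hα : Cardinal.aleph0 ≤ α) (hγ : γ < α) :
    GBDenseLineable 𝕜 M γ α ↔ InfGBDenseLineable 𝕜 M α γ α := by
  refine ⟨fun ⟨hex, hY⟩ => ⟨hex, fun W hW hWM => ?_⟩,
    fun ⟨hex, hY⟩ => ⟨hex, fun W hW hWM => ?_⟩⟩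
  · obtain ⟨Y, hWY, hYd, hYr, hYM⟩ := hY W hW hWM
    obtain ⟨ι, Z, hι, hZ, hZW⟩ :=
      W.exists_dense_family_inf_eq Y hWY hYd (by rwa [hW, hYr]) (hYr ▸ hα)
    refine ⟨ι, Z, hι.trans hYr, fun i => ?_, hZW⟩
    obtain ⟨hWZ, hZY, hZd, hZr⟩ := hZ i
    exact ⟨hWZ, hZd, hZr.trans hYr, (SetLike.coe_subset_coe.2 hZY).trans hYM⟩
  · obtain ⟨ι, Y, hι, hY, -⟩ := hY W hW hWM
    have : Nonempty ι := Cardinal.mk_ne_zero_iff.1 (hι ▸ (Cardinal.aleph0_pos.trans_le hα).ne')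
    exact ⟨Y (Classical.arbitrary ι), hY _⟩
end
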